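/- Let μ be a positive locally finite Borel measure on ℝⁿ that is doubling. Then for every κ ∈ ℕ there exists a positive constant C_κ, depending only on n, κ and the doubling constant of μ, such that |Q|_μ ≤ C_κ ∫_Q |P(x)|² dμ(x) for all cubes Q in ℝⁿ and all Q-normalized polynomials P of degree less than κ. -/

import Mathlib

/-!
On the unit cube, polynomials of degree `< κ` bounded by `1` form a bounded subset of a
finite-dimensional space of continuous functions, hence are uniformly equicontinuous. Rescaling,
there is `γ = γ(n, κ)` such that on every cube `Q` a `Q`-normalized `P` has `|P| ≥ 1/2` on a cube
`Q'` of side `γ ℓ(Q)` inside `Q` next to a point where `|P| = 1`. Since `Q` lies in the `2ᵏ`-fold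
dilate of `Q'` with `2ᵏ γ ≥ 2`, doubling gives `|Q|_μ ≤ Dᵏ |Q'|_μ ≤ 4 Dᵏ ∫_Q |P|² dμ`.
-/

open MeasureTheory Set Function
open scoped ENNReal NNReal

noncomputable section

/-- `ℝⁿ` with the Euclidean metric. -/
abbrev Rn (n : ℕ) : Type := EuclideanSpace ℝ (Fin n)

/-- The closed axes-parallel cube with center `c` and side length `l`. -/
def Cube {n : ℕ} (c : Rn n) (l : ℝ) : Set (Rn n) :=
  {x | ∀ i, |x i - c i| ≤ l / 2}

/-- `μ` is doubling with doubling constant `D`: `|2Q|_μ ≤ D |Q|_μ` for all cubes `Q`. -/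
def DoublingWith {n : ℕ} (μ : Measure (Rn n)) (D : ℝ) : Prop :=
  ∀ (c : Rn n) (l : ℝ), 0 < l → μ (Cube c (2 * l)) ≤ ENNReal.ofReal D * μ (Cube c l)

/-- `μ` has doubling exponent `θ`: `|2^{-k}Q|_μ ≥ 2^{-θ k}|Q|_μ` for all cubes `Q`, `k ∈ ℕ`. -/
def HasDoublingExp {n : ℕ} (μ : Measure (Rn n)) (θ : ℝ) : Prop :=
  ∀ (c : Rn n) (l : ℝ) (k : ℕ), 0 < l →
    ENNReal.ofReal ((2 : ℝ) ^ (-(θ * (k : ℝ)))) * μ (Cube c l) ≤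
      μ (Cube c ((2 : ℝ) ^ (-(k : ℝ)) * l))

/-- Coifman–Fefferman comparability with parameters `ε, η`:
for all cubes `Q` and compact `E ⊆ Q`, `|E|_ω/|Q|_ω < ε` implies `|E|_σ/|Q|_σ < η`. -/
def CFComparable {n : ℕ} (σ ω : Measure (Rn n)) (ε η : ℝ) : Prop :=
  ∀ (c : Rn n) (l : ℝ), 0 < l → ∀ E : Set (Rn n), IsCompact E → E ⊆ Cube c l →
    ω E < ENNReal.ofReal ε * ω (Cube c l) → σ E < ENNReal.ofReal η * σ (Cube c l)

theorem ContinuousMap.uniformEquicontinuous_of_finiteDimensional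
    {𝕜 X E ι : Type*} [NontriviallyNormedField 𝕜] [CompleteSpace 𝕜]
    [UniformSpace X] [CompactSpace X] [NormedAddCommGroup E] [NormedSpace 𝕜 E]
    (F : Submodule 𝕜 C(X, E)) [FiniteDimensional 𝕜 F] {f : ι → C(X, E)} (hfF : ∀ i, f i ∈ F)
    {C : ℝ} (hfC : ∀ i, ‖f i‖ ≤ C) : UniformEquicontinuous fun i => ⇑(f i) := by
  let ev : X → F →L[𝕜] E := fun x => (ContinuousMap.evalCLM 𝕜 x).comp F.subtypeL
  -- As `F` is finite-dimensional, pointwise continuity of `ev` is continuity in operator norm.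
  have hev : UniformContinuous ev := CompactSpace.uniformContinuous_of_continuous <|
    continuous_clm_apply.2 fun g => (g : C(X, E)).continuous
  rw [Metric.uniformEquicontinuous_iff_right]
  intro ε hε
  have hC : 0 < max C 1 := lt_max_of_lt_right one_pos
  filter_upwards [hev (Metric.dist_mem_uniformity (α := F →L[𝕜] E) (div_pos hε hC))]
    with xy hxy i
  have hxy' : ‖ev xy.1 - ev xy.2‖ < ε / max C 1 := dist_eq_norm (ev xy.1) (ev xy.2) ▸ hxy
  calc dist (f i xy.1) (f i xy.2) = ‖(ev xy.1 - ev xy.2) ⟨f i, hfF i⟩‖ := by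
        rw [dist_eq_norm]; rfl
    _ ≤ ‖ev xy.1 - ev xy.2‖ * ‖f i‖ := (ev xy.1 - ev xy.2).le_opNorm _
    _ ≤ ‖ev xy.1 - ev xy.2‖ * max C 1 := by gcongr; exact (hfC i).trans (le_max_left _ _)
    _ < ε / max C 1 * max C 1 := by gcongr
    _ = ε := div_mul_cancel₀ ε hC.ne'

lemma IsCompact.exists_eq_and_forall_le_of_sSup_image_eq {X : Type*} [TopologicalSpace X]
    {s : Set X} {f : X → ℝ} (hs : IsCompact s) (hne : s.Nonempty) (hf : ContinuousOn f s)
    {a : ℝ} (ha : sSup (f '' s) = a) : ∃ x ∈ s, f x = a ∧ ∀ y ∈ s, f y ≤ a := by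
  obtain ⟨x, hx, hmax⟩ := hs.exists_isMaxOn hne hf
  have hsup : sSup (f '' s) = f x :=
    IsGreatest.csSup_eq ⟨mem_image_of_mem f hx, forall_mem_image.2 hmax⟩
  rw [hsup] at ha
  exact ⟨x, hx, ha, fun y hy => ha ▸ hmax hy⟩

namespace MvPolynomial

theorem totalDegree_bind₁_le {σ τ R : Type*} [CommSemiring R] (g : σ → MvPolynomial τ R)
    {m : ℕ} (hg : ∀ i, (g i).totalDegree ≤ m) (p : MvPolynomial σ R) :
    (bind₁ g p).totalDegree ≤ p.totalDegree * m := by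
  conv_lhs => rw [p.as_sum, map_sum]
  refine (totalDegree_finsetSum _ _).trans (Finset.sup_le fun β hβ => ?_)
  rw [bind₁_monomial]
  refine (totalDegree_mul _ _).trans ?_
  rw [totalDegree_C, zero_add]
  refine (totalDegree_finsetProd _ _).trans ?_
  calc ∑ i ∈ β.support, (g i ^ β i).totalDegree ≤ ∑ i ∈ β.support, β i * m :=
        Finset.sum_le_sum fun i _ => (totalDegree_pow _ _).trans (Nat.mul_le_mul_left _ (hg i))
    _ = β.degree * m := by rw [← Finset.sum_mul]; rfl
    _ ≤ p.totalDegree * m := Nat.mul_le_mul_right _ (le_totalDegree hβ)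

theorem exists_abs_eval_sub_lt {ι : Type*} [Fintype ι] {K : Set (ι → ℝ)} (hK : IsCompact K)
    (d : ℕ) {ε : ℝ} (hε : 0 < ε) :
    ∃ δ > 0, ∀ p : MvPolynomial ι ℝ, p.totalDegree ≤ d → (∀ x ∈ K, |eval x p| ≤ 1) →
      ∀ x ∈ K, ∀ y ∈ K, dist x y < δ → |eval x p - eval y p| < ε := by
  have : CompactSpace K := isCompact_iff_compactSpace.mp hK
  let restrictK : MvPolynomial ι ℝ →ₗ[ℝ] C(K, ℝ) :=
    { toFun p := ⟨fun x => eval (x : ι → ℝ) p, (continuous_eval p).comp continuous_subtype_val⟩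
      map_add' := fun p q => by ext; simp
      map_smul' := fun a p => by ext; simp }
  let P := {p : MvPolynomial ι ℝ // p.totalDegree ≤ d ∧ ∀ x ∈ K, |eval x p| ≤ 1}
  have hequi : UniformEquicontinuous fun p : P => ⇑(restrictK p) :=
    ContinuousMap.uniformEquicontinuous_of_finiteDimensional
      ((restrictTotalDegree ι ℝ d).map restrictK)
      (fun p => Submodule.mem_map_of_mem ((mem_restrictTotalDegree _ _ _).2 p.2.1))
      (fun p => (ContinuousMap.norm_le _ zero_le_one).2 fun x => p.2.2 x x.2)
  obtain ⟨δ, hδ, hδε⟩ := Metric.uniformEquicontinuous_iff.1 hequi ε hε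
  exact ⟨δ, hδ, fun p hp hpK x hx y hy hxy => hδε ⟨x, hx⟩ ⟨y, hy⟩ hxy ⟨p, hp, hpK⟩⟩

end MvPolynomial

section Cube

variable {n : ℕ} {c c' y : Rn n} {l l' γ : ℝ}

lemma isCompact_cube (c : Rn n) (l : ℝ) : IsCompact (Cube c l) := by
  have hpi : Cube c l = WithLp.ofLp ⁻¹' univ.pi fun i => Icc (c i - l / 2) (c i + l / 2) := by
    ext x
    simp only [Cube, mem_ofPred_eq, mem_preimage, mem_pi, mem_univ, true_implies, mem_Icc, abs_le]
    exact forall_congr' fun i => by constructor <;> rintro ⟨h₁, h₂⟩ <;> constructor <;> linarith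
  rw [hpi]
  exact (PiLp.homeomorph 2 _).isCompact_preimage.2 (isCompact_univ_pi fun _ => isCompact_Icc)

lemma center_mem_cube (hl : 0 ≤ l) : c ∈ Cube c l := fun i => by
  rw [sub_self, abs_zero]; positivity

lemma cube_mono (h : l ≤ l') : Cube c l ⊆ Cube c l' := fun _ hx i => (hx i).trans (by linarith)

lemma cube_subset_cube_two_mul_of_mem (hc' : c' ∈ Cube c l) : Cube c l ⊆ Cube c' (2 * l) :=
  fun x hx i => by
    have := abs_sub_le (x i) (c i) (c' i)
    have := abs_sub_comm (c i) (c' i) ▸ hc' i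
    linarith [hx i]

/-- The witness is the image of `Cube c l` under the homothety of ratio `γ` centered at `y`. -/
lemma exists_cube_subset_cube_forall_abs_sub_le (hy : y ∈ Cube c l) (hγ₀ : 0 ≤ γ) (hγ₁ : γ ≤ 1) :
    ∃ c', Cube c' (γ * l) ⊆ Cube c l ∧ ∀ x ∈ Cube c' (γ * l), ∀ i, |x i - y i| ≤ γ * l := by
  have hc' : ∀ i, (c + (1 - γ) • (y - c)) i = c i + (1 - γ) * (y i - c i) := fun i => rfl
  refine ⟨c + (1 - γ) • (y - c), fun x hx i => ?_, fun x hx i => ?_⟩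
  all_goals have hxi := hc' i ▸ hx i
  · calc |x i - c i| = |(x i - (c i + (1 - γ) * (y i - c i))) + (1 - γ) * (y i - c i)| := by
          ring_nf
      _ ≤ γ * l / 2 + (1 - γ) * (l / 2) := by
          refine (abs_add_le _ _).trans (add_le_add hxi ?_)
          rw [abs_mul, abs_of_nonneg (sub_nonneg.2 hγ₁)]
          exact mul_le_mul_of_nonneg_left (hy i) (sub_nonneg.2 hγ₁)
      _ = l / 2 := by ring
  · calc |x i - y i| = |(x i - (c i + (1 - γ) * (y i - c i))) - γ * (y i - c i)| := by
          ring_nf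
      _ ≤ γ * l / 2 + γ * (l / 2) := by
          refine (abs_sub _ _).trans (add_le_add hxi ?_)
          rw [abs_mul, abs_of_nonneg hγ₀]
          exact mul_le_mul_of_nonneg_left (hy i) hγ₀
      _ = γ * l := by ring

lemma DoublingWith.measure_cube_two_pow_mul_le {μ : Measure (Rn n)} {D : ℝ}
    (hμ : DoublingWith μ D) (hl : 0 < l) (k : ℕ) :
    μ (Cube c (2 ^ k * l)) ≤ ENNReal.ofReal D ^ k * μ (Cube c l) := by
  induction k with
  | zero => simp
  | succ k ih =>
    calc μ (Cube c (2 ^ (k + 1) * l)) = μ (Cube c (2 * (2 ^ k * l))) := by ring_nf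
      _ ≤ ENNReal.ofReal D * μ (Cube c (2 ^ k * l)) := hμ c _ (by positivity)
      _ ≤ ENNReal.ofReal D * (ENNReal.ofReal D ^ k * μ (Cube c l)) := by gcongr
      _ = ENNReal.ofReal D ^ (k + 1) * μ (Cube c l) := by ring

end Cube

open MvPolynomial in
theorem exists_abs_eval_sub_lt_of_mem_cube (n d : ℕ) :
    ∃ γ > 0, γ ≤ 1 ∧ ∀ (c : Rn n) (l : ℝ), 0 < l → ∀ p : MvPolynomial (Fin n) ℝ,
      p.totalDegree ≤ d → (∀ x ∈ Cube c l, |eval (fun i => x i) p| ≤ 1) →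
      ∀ x ∈ Cube c l, ∀ y ∈ Cube c l, (∀ i, |x i - y i| ≤ γ * l) →
        |eval (fun i => x i) p - eval (fun i => y i) p| < 1 / 2 := by
  -- In the sup norm of `Fin n → ℝ`, `closedBall 0 (1 / 2)` is the unit cube.
  obtain ⟨δ, hδ, hδK⟩ := exists_abs_eval_sub_lt (isCompact_closedBall (0 : Fin n → ℝ) (1 / 2)) d
    (by norm_num : (0 : ℝ) < 1 / 2)
  refine ⟨min (δ / 2) 1, by positivity, min_le_right _ _, fun c l hl p hp hpQ x hx y hy hxy => ?_⟩
  have mem_unitBall : ∀ u : Fin n → ℝ, u ∈ Metric.closedBall 0 (1 / 2) ↔ ∀ i, |u i| ≤ 1 / 2 :=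
    fun u => by simp [pi_norm_le_iff_of_nonneg]
  let q := bind₁ (fun i => C (c i) + C l * X i) p
  have hq : ∀ u, eval u q = eval (fun i => c i + l * u i) p := fun u =>
    (eval₂Hom_bind₁ (RingHom.id ℝ) u _ p).trans (by simp)
  have hqd : q.totalDegree ≤ d := by
    refine (totalDegree_bind₁_le _ (m := 1) (fun i => ?_) p).trans (by simpa using hp)
    exact (totalDegree_add _ _).trans (max_le (by simp) ((totalDegree_mul _ _).trans (by simp)))
  have hqK : ∀ u ∈ Metric.closedBall 0 (1 / 2), |eval u q| ≤ 1 := fun u hu => by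
    rw [hq]
    refine hpQ (WithLp.toLp 2 fun i => c i + l * u i) fun i => ?_
    simp only [add_sub_cancel_left, abs_mul, abs_of_pos hl]
    nlinarith [(mem_unitBall u).1 hu i]
  let scale : Rn n → Fin n → ℝ := fun z i => (z i - c i) / l
  have hscale : ∀ z : Rn n, eval (scale z) q = eval (fun i => z i) p := fun z => by
    rw [hq]; congr; funext i; simp only [scale]; field_simp; ring
  have hscaleK : ∀ z ∈ Cube c l, scale z ∈ Metric.closedBall 0 (1 / 2) := fun z hz =>
    (mem_unitBall _).2 fun i => by
      rw [abs_div, abs_of_pos hl, div_le_iff₀ hl]; linarith [hz i]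
  have hdist : dist (scale x) (scale y) < δ := by
    refine (dist_pi_lt_iff hδ).2 fun i => ?_
    rw [Real.dist_eq, ← sub_div, sub_sub_sub_cancel_right, abs_div, abs_of_pos hl, div_lt_iff₀ hl]
    calc |x i - y i| ≤ min (δ / 2) 1 * l := hxy i
      _ ≤ δ / 2 * l := by gcongr; exact min_le_left _ _
      _ < δ * l := by nlinarith
  simpa only [hscale] using hδK q hqd hqK _ (hscaleK x hx) _ (hscaleK y hy) hdist

lemma measure_le_four_mul_setLIntegral_sq {X : Type*} [MeasurableSpace X] {μ : Measure X}
    {S Q : Set X} {g : X → ℝ} (hg : Measurable g) (hSQ : S ⊆ Q) (hS : ∀ x ∈ S, 1 / 2 ≤ |g x|) :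
    μ S ≤ ENNReal.ofReal 4 * ∫⁻ x in Q, ENNReal.ofReal (g x ^ 2) ∂μ := by
  have hg2 : Measurable fun x => ENNReal.ofReal (g x ^ 2) := (hg.pow_const 2).ennreal_ofReal
  calc μ S = ∫⁻ _ in S, 1 ∂μ := (setLIntegral_one S).symm
    _ ≤ ∫⁻ x in S, ENNReal.ofReal 4 * ENNReal.ofReal (g x ^ 2) ∂μ := by
        refine setLIntegral_mono (hg2.const_mul _) fun x hx => ?_
        rw [← ENNReal.ofReal_mul (by norm_num), ENNReal.one_le_ofReal]
        nlinarith [hS x hx, sq_abs (g x)]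
    _ = ENNReal.ofReal 4 * ∫⁻ x in S, ENNReal.ofReal (g x ^ 2) ∂μ := lintegral_const_mul _ hg2
    _ ≤ ENNReal.ofReal 4 * ∫⁻ x in Q, ENNReal.ofReal (g x ^ 2) ∂μ := by gcongr

/-- If `μ` is a doubling measure on `ℝⁿ` (with doubling constant `D`),
then for every `κ ∈ ℕ` there is `C_κ > 0`, depending only on `n`, `κ` and `D`, with
`|Q|_μ ≤ C_κ ∫_Q |P|² dμ` for all cubes `Q` and all `Q`-normalized polynomials `P` of
degree less than `κ`. -/
theorem statement12
    (n : ℕ) (D : ℝ) (hD : 0 < D) (κ : ℕ) :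
    ∃ Cκ : ℝ, 0 < Cκ ∧
      ∀ μ : Measure (Rn n), IsLocallyFiniteMeasure μ → DoublingWith μ D →
      ∀ (c : Rn n) (l : ℝ), 0 < l →
      ∀ p : MvPolynomial (Fin n) ℝ, p.totalDegree < κ →
        sSup ((fun x : Rn n => |MvPolynomial.eval (fun i => x i) p|) '' Cube c l) = 1 →
        μ (Cube c l) ≤ ENNReal.ofReal Cκ *
          ∫⁻ x in Cube c l, ENNReal.ofReal (MvPolynomial.eval (fun i => x i) p ^ 2) ∂μ := by
  obtain ⟨γ, hγ₀, hγ₁, hγ⟩ := exists_abs_eval_sub_lt_of_mem_cube n κ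
  obtain ⟨k, hk⟩ : ∃ k : ℕ, 2 / γ < 2 ^ k := pow_unbounded_of_one_lt _ one_lt_two
  refine ⟨4 * D ^ k, by positivity, fun μ _ hμ c l hl p hp hsup => ?_⟩
  have hpc : Continuous fun x : Rn n => MvPolynomial.eval (fun i => x i) p :=
    (MvPolynomial.continuous_eval p).comp (PiLp.continuous_ofLp 2 _)
  obtain ⟨x₀, hx₀Q, hx₀, hpQ⟩ := (isCompact_cube c l).exists_eq_and_forall_le_of_sSup_image_eq
    ⟨c, center_mem_cube hl.le⟩ hpc.abs.continuousOn hsup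
  obtain ⟨c', hc'Q, hc'x₀⟩ := exists_cube_subset_cube_forall_abs_sub_le hx₀Q hγ₀.le hγ₁
  have hlarge : ∀ x ∈ Cube c' (γ * l), 1 / 2 ≤ |MvPolynomial.eval (fun i => x i) p| := by
    intro x hx
    have := hγ c l hl p hp.le hpQ x₀ hx₀Q x (hc'Q hx) fun i =>
      abs_sub_comm (x i) (x₀ i) ▸ hc'x₀ x hx i
    linarith [abs_sub_abs_le_abs_sub (MvPolynomial.eval (fun i => x₀ i) p)
      (MvPolynomial.eval (fun i => x i) p)]
  have hcover : Cube c l ⊆ Cube c' (2 ^ k * (γ * l)) :=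
    (cube_subset_cube_two_mul_of_mem (hc'Q (center_mem_cube (by positivity)))).trans
      (cube_mono (by rw [div_lt_iff₀ hγ₀] at hk; nlinarith))
  calc μ (Cube c l) ≤ μ (Cube c' (2 ^ k * (γ * l))) := measure_mono hcover
    _ ≤ ENNReal.ofReal D ^ k * μ (Cube c' (γ * l)) :=
        hμ.measure_cube_two_pow_mul_le (by positivity) k
    _ ≤ ENNReal.ofReal D ^ k * (ENNReal.ofReal 4 *
          ∫⁻ x in Cube c l, ENNReal.ofReal (MvPolynomial.eval (fun i => x i) p ^ 2) ∂μ) := by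
        gcongr
        exact measure_le_four_mul_setLIntegral_sq hpc.measurable hc'Q hlarge
    _ = ENNReal.ofReal (4 * D ^ k) *
          ∫⁻ x in Cube c l, ENNReal.ofReal (MvPolynomial.eval (fun i => x i) p ^ 2) ∂μ := by
        rw [ENNReal.ofReal_mul (by norm_num), ENNReal.ofReal_pow hD.le]; ring
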